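/- Let A be a Pickands dependence function, let x₁ ∈ (0,1) be such that A is affine on [0,x₁], set y₁ = A(x₁), and let x ∈ (0,x₁) and y ∈ ℝ. Suppose B is a Pickands dependence function such that B = A on [x₁,1], B is affine on [0,x] and on [x,x₁], and B(x) = y. Then ρ(B) − ρ(A) = 6·(x₁(1−y) − x(1−y₁)) / ((1+y)(1+y₁)). -/

import Mathlib

open MeasureTheory

/-- A Pickands dependence function: a convex function on `[0,1]` with
`max (1 - t) t ≤ A t ≤ 1` for all `t ∈ [0,1]`. -/
def IsPickands (A : ℝ → ℝ) : Prop :=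
  ConvexOn ℝ (Set.Icc (0 : ℝ) 1) A ∧
    ∀ t ∈ Set.Icc (0 : ℝ) 1, max (1 - t) t ≤ A t ∧ A t ≤ 1

/-- The right-hand derivative `D⁺A` of `A` on `[0,1)`, extended constantly by `D⁺A 0`
to the left of `0` and by the value `1` on `[1,∞)` (the integrand of Kendall's tau
vanishes at the endpoints, so these conventions do not affect it). -/
noncomputable def pickandsD (A : ℝ → ℝ) (t : ℝ) : ℝ :=
  if t < 0 then derivWithin A (Set.Ioi (0 : ℝ)) 0
  else if t < 1 then derivWithin A (Set.Ioi t) t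
  else 1

open scoped Classical in
/-- Kendall's tau of a Pickands dependence function `A`:
`τ(A) = ∫_{[0,1]} t (1 - t) / A t  d(D⁺A)(t)`, the integral being taken with respect to
the Lebesgue–Stieltjes measure induced by the nondecreasing right-continuous
function `D⁺A`. (For a Pickands function `A`, `pickandsD A` is monotone, so the
junk value `0` of the `else` branch is never used.) -/
noncomputable def kendallTau (A : ℝ → ℝ) : ℝ :=
  if h : Monotone (pickandsD A) then
    ∫ t in Set.Icc (0 : ℝ) 1, t * (1 - t) / A t ∂h.stieltjesFunction.measure
  else 0

/-- Spearman's rho of a Pickands dependence function: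
`ρ(A) = 12 ∫₀¹ 1 / (1 + A t)² dt - 3`. -/
noncomputable def spearmanRho (A : ℝ → ℝ) : ℝ :=
  12 * (∫ t in (0 : ℝ)..1, 1 / (1 + A t) ^ 2) - 3

/-- `A` is affine on the interval `[p,q]`. -/
def AffineOnIcc (A : ℝ → ℝ) (p q : ℝ) : Prop :=
  ∃ a b : ℝ, ∀ t ∈ Set.Icc p q, A t = a * t + b

/-- The triangular Pickands dependence function `T_{x₁,y₁}`: affine on `[0,x₁]` and on
`[x₁,1]` with `T 0 = T 1 = 1` and `T x₁ = y₁`. -/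
noncomputable def triangular (x₁ y₁ : ℝ) (t : ℝ) : ℝ :=
  if t ≤ x₁ then 1 + (y₁ - 1) * t / x₁
  else y₁ + (1 - y₁) * (t - x₁) / (1 - x₁)

/-- The functional `Δ(C,D) = ρ(C) - ρ(D) - (3τ(C)/(2+τ(C)) - 3τ(D)/(2+τ(D)))`. -/
noncomputable def Delta (C D : ℝ → ℝ) : ℝ :=
  spearmanRho C - spearmanRho D -
    (3 * kendallTau C / (2 + kendallTau C) - 3 * kendallTau D / (2 + kendallTau D))

lemma integral_one_div_affine_sq (f : ℝ → ℝ) (p q : ℝ) (hpq : p < q)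
    (haff : ∃ a b : ℝ, ∀ t ∈ Set.Icc p q, f t = a * t + b)
    (hp : 0 < 1 + f p) (hq : 0 < 1 + f q) :
    ∫ t in p..q, 1 / (1 + f t) ^ 2 = (q - p) / ((1 + f p) * (1 + f q)) := by
  obtain ⟨a, b, hab⟩ := haff
  have hfp : f p = a * p + b := hab p ⟨le_rfl, hpq.le⟩
  have hfq : f q = a * q + b := hab q ⟨hpq.le, le_rfl⟩
  have hpos : ∀ t ∈ Set.Icc p q, 0 < 1 + (a * t + b) := by
    intro t ht
    rcases le_or_gt 0 a with h | h
    · nlinarith [ht.1, hfp ▸ hp]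
    · nlinarith [ht.2, hfq ▸ hq]
  have hcong : ∫ t in p..q, 1 / (1 + f t) ^ 2 = ∫ t in p..q, 1 / (1 + (a * t + b)) ^ 2 := by
    apply intervalIntegral.integral_congr
    intro t ht
    rw [Set.uIcc_of_le hpq.le] at ht
    simp only [hab t ht]
  rw [hcong, hfp, hfq]
  rcases eq_or_ne a 0 with rfl | ha
  · simp only [zero_mul, zero_add]
    rw [intervalIntegral.integral_const]
    rw [smul_eq_mul]
    field_simp
  · have key : ∫ t in p..q, 1 / (1 + (a * t + b)) ^ 2
        = (-(a⁻¹) * (1 + (a * q + b))⁻¹) - (-(a⁻¹) * (1 + (a * p + b))⁻¹) := by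
      apply intervalIntegral.integral_eq_sub_of_hasDerivAt
      · intro t ht
        rw [Set.uIcc_of_le hpq.le] at ht
        have h0 : 1 + (a * t + b) ≠ 0 := (hpos t ht).ne'
        have : HasDerivAt (fun t : ℝ => 1 + (a * t + b)) a t := by
          simpa using (((hasDerivAt_id t).const_mul a).add_const b).const_add 1
        have h2 := (this.inv h0).const_mul (-(a⁻¹))
        convert h2 using 1
        · rfl
        · rfl
        · field_simp
      · apply ContinuousOn.intervalIntegrable
        intro t ht
        rw [Set.uIcc_of_le hpq.le] at ht
        have h0 : 1 + (a * t + b) ≠ 0 := (hpos t ht).ne'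
        apply ContinuousWithinAt.div continuousWithinAt_const
        · exact (((continuousWithinAt_id.const_smul a).add continuousWithinAt_const).const_add 1).pow 2
        · positivity
    rw [key]
    have h1 : (0:ℝ) < 1 + (a * p + b) := hfp ▸ hp
    have h2 : (0:ℝ) < 1 + (a * q + b) := hfq ▸ hq
    field_simp
    ring

lemma pickands_intervalIntegrable (f : ℝ → ℝ) (hf : IsPickands f) (p q : ℝ)
    (hp : 0 ≤ p) (hq : q ≤ 1) (hpq : p ≤ q) :
    IntervalIntegrable (fun t => 1 / (1 + f t) ^ 2) volume p q := by
  have hcont : ContinuousOn f (Set.Ioo 0 1) := by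
    have := hf.1.continuousOn_interior
    rwa [interior_Icc] at this
  have hmeas : AEStronglyMeasurable (fun t => 1 / (1 + f t) ^ 2)
      (volume.restrict (Set.Ioc p q)) := by
    have h1 : ContinuousOn (fun t => 1 / (1 + f t) ^ 2) (Set.Ioo 0 1) := by
      intro t ht
      have h0 : (0:ℝ) < 1 + f t := by
        have h1 := (hf.2 t (Set.Ioo_subset_Icc_self ht)).1
        have h2 := le_max_right (1 - t) t
        have : t ≤ f t := le_trans h2 h1
        linarith [ht.1]
      exact ContinuousWithinAt.div continuousWithinAt_const
        (((hcont t ht).const_add 1).pow 2) (by positivity)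
    have h2 : AEStronglyMeasurable (fun t => 1 / (1 + f t) ^ 2)
        (volume.restrict (Set.Ioo 0 1)) :=
      h1.aestronglyMeasurable measurableSet_Ioo
    have h3 : volume.restrict (Set.Ioo (0:ℝ) 1) = volume.restrict (Set.Ioc (0:ℝ) 1) :=
      Measure.restrict_congr_set Ioo_ae_eq_Ioc
    rw [h3] at h2
    exact h2.mono_measure (Measure.restrict_mono (Set.Ioc_subset_Ioc hp hq) le_rfl)
  have hbound : ∀ᵐ t ∂(volume.restrict (Set.Ioc p q)),
      ‖(fun t => 1 / (1 + f t) ^ 2) t‖ ≤ 1 := by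
    filter_upwards [ae_restrict_mem measurableSet_Ioc] with t ht
    have ht' : t ∈ Set.Icc (0:ℝ) 1 := ⟨le_trans hp ht.1.le, le_trans ht.2 hq⟩
    have h0 : (0:ℝ) ≤ f t := by
      have := (hf.2 t ht').1
      have h := le_max_right (1 - t) t
      linarith [ht'.1]
    have h1 : (1:ℝ) ≤ 1 + f t := by linarith
    rw [Real.norm_eq_abs, abs_of_nonneg (by positivity)]
    rw [div_le_one (by positivity)]
    nlinarith
  have hint : IntegrableOn (fun t => 1 / (1 + f t) ^ 2) (Set.Ioc p q) volume :=
    Integrable.mono' (integrable_const 1) hmeas hbound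
  rw [intervalIntegrable_iff_integrableOn_Ioc_of_le hpq]
  exact hint

/-- the change of Spearman's rho under insertion of a new vertex `(x, y)`
on the first affine piece `[0,x₁]` of a Pickands dependence function `A`
(here `y₁ = A x₁`). -/
theorem spearmanRho_insert_vertex (A B : ℝ → ℝ) (x₁ x y : ℝ)
    (hA : IsPickands A) (hx₁ : x₁ ∈ Set.Ioo (0 : ℝ) 1)
    (hAaff : AffineOnIcc A 0 x₁) (hx : x ∈ Set.Ioo 0 x₁)
    (hB : IsPickands B) (hBA : ∀ t ∈ Set.Icc x₁ 1, B t = A t)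
    (hB1 : AffineOnIcc B 0 x) (hB2 : AffineOnIcc B x x₁) (hBx : B x = y) :
    spearmanRho B - spearmanRho A =
      6 * (x₁ * (1 - y) - x * (1 - A x₁)) / ((1 + y) * (1 + A x₁)) := by
  obtain ⟨hx₁0, hx₁1⟩ := hx₁
  obtain ⟨hx0, hxx₁⟩ := hx
  have hx1 : x < 1 := hxx₁.trans hx₁1
  -- values at key points
  have hA0 : A 0 = 1 := by
    have h := hA.2 0 ⟨le_rfl, zero_le_one⟩
    have := le_max_left (1 - (0:ℝ)) 0
    have h1 : (1:ℝ) ≤ A 0 := by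
      have := h.1; simp at this; linarith [this]
    linarith [h.2]
  have hB0 : B 0 = 1 := by
    have h := hB.2 0 ⟨le_rfl, zero_le_one⟩
    have h1 : (1:ℝ) ≤ B 0 := by
      have := h.1; simp at this; linarith [this]
    linarith [h.2]
  have hBx₁ : B x₁ = A x₁ := hBA x₁ ⟨le_rfl, hx₁1.le⟩
  -- positivity
  have hyA : (0:ℝ) < 1 + A x₁ := by
    have h := (hA.2 x₁ ⟨hx₁0.le, hx₁1.le⟩).1
    have := le_max_right (1 - x₁) x₁
    nlinarith
  have hyB : (0:ℝ) < 1 + y := by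
    have h := (hB.2 x ⟨hx0.le, hx1.le⟩).1
    have := le_max_right (1 - x) x
    rw [hBx] at h
    nlinarith
  -- integrability
  have iB1 := pickands_intervalIntegrable B hB 0 x le_rfl hx1.le hx0.le
  have iB2 := pickands_intervalIntegrable B hB x x₁ hx0.le hx₁1.le hxx₁.le
  have iB3 := pickands_intervalIntegrable B hB x₁ 1 hx₁0.le le_rfl hx₁1.le
  have iA1 := pickands_intervalIntegrable A hA 0 x₁ le_rfl hx₁1.le hx₁0.le
  have iA3 := pickands_intervalIntegrable A hA x₁ 1 hx₁0.le le_rfl hx₁1.le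
  -- splits
  have hsplitA : (∫ t in (0:ℝ)..1, 1 / (1 + A t) ^ 2)
      = (∫ t in (0:ℝ)..x₁, 1 / (1 + A t) ^ 2) + ∫ t in x₁..1, 1 / (1 + A t) ^ 2 :=
    (intervalIntegral.integral_add_adjacent_intervals iA1 iA3).symm
  have hsplitB : (∫ t in (0:ℝ)..1, 1 / (1 + B t) ^ 2)
      = (∫ t in (0:ℝ)..x, 1 / (1 + B t) ^ 2) + (∫ t in x..x₁, 1 / (1 + B t) ^ 2)
        + ∫ t in x₁..1, 1 / (1 + B t) ^ 2 := by
    rw [intervalIntegral.integral_add_adjacent_intervals iB1 iB2,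
      intervalIntegral.integral_add_adjacent_intervals (iB1.trans iB2) iB3]
  -- tails agree
  have htail : (∫ t in x₁..1, 1 / (1 + B t) ^ 2) = ∫ t in x₁..1, 1 / (1 + A t) ^ 2 := by
    apply intervalIntegral.integral_congr
    intro t ht
    rw [Set.uIcc_of_le hx₁1.le] at ht
    simp only [hBA t ht]
  -- affine pieces
  have e1 : (∫ t in (0:ℝ)..x, 1 / (1 + B t) ^ 2) = (x - 0) / ((1 + B 0) * (1 + B x)) :=
    integral_one_div_affine_sq B 0 x hx0 hB1 (by rw [hB0]; norm_num) (by rw [hBx]; exact hyB)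
  have e2 : (∫ t in x..x₁, 1 / (1 + B t) ^ 2) = (x₁ - x) / ((1 + B x) * (1 + B x₁)) :=
    integral_one_div_affine_sq B x x₁ hxx₁ hB2 (by rw [hBx]; exact hyB)
      (by rw [hBx₁]; exact hyA)
  have e3 : (∫ t in (0:ℝ)..x₁, 1 / (1 + A t) ^ 2) = (x₁ - 0) / ((1 + A 0) * (1 + A x₁)) :=
    integral_one_div_affine_sq A 0 x₁ hx₁0 hAaff (by rw [hA0]; norm_num) hyA
  rw [hB0, hBx] at e1
  rw [hBx, hBx₁] at e2
  rw [hA0] at e3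
  unfold spearmanRho
  rw [hsplitA, hsplitB, htail, e1, e2, e3]
  have h1 : (1 + y) ≠ 0 := hyB.ne'
  have h2 : (1 + A x₁) ≠ 0 := hyA.ne'
  field_simp
  ring
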